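/- arXiv:1311.4348 — 6 statements merged into one kernel-verified Lean document; each statement's English description precedes it below -/
import Mathlib

section
/- For any partition τ = (n_1 ≥ n_2 ≥ ... ≥ n_k) of n, the polynomial P(q) = (q-1)(q^2-1)···(q^n-1) is divisible in ℤ[q] by the product (q^{n_1}-1)(q^{n_2}-1)···(q^{n_k}-1). -/
/-!
Factor every `X ^ m - 1` into cyclotomic polynomials, `X ^ m - 1 = ∏_{d ∣ m} Φ_d`. The factor `Φ_d`
occurs in `∏_{i ≤ n} (X ^ i - 1)` exactly `⌊n / d⌋` times, and in `∏_i (X ^ {n_i} - 1)` once for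
each part `n_i` divisible by `d`. There are at most `⌊n / d⌋` such parts, because each of them is at
least `d` and together they sum to at most `n`.
-/

open Polynomial

namespace Multiset

theorem prod_map_X_pow_sub_one_eq_prod_cyclotomic {R : Type*} [CommRing R] {s : Multiset ℕ}
    (hs : ∀ m ∈ s, 0 < m) :
    (s.map fun m => (X : R[X]) ^ m - 1).prod
      = ((s.bind fun m => m.divisors.val).map fun d => cyclotomic d R).prod := by
  rw [map_bind, prod_bind]
  exact congrArg prod <| map_congr rfl fun m hm =>
    (prod_cyclotomic_eq_X_pow_sub_one (hs m hm) R).symm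

theorem count_bind_divisors (d : ℕ) (s : Multiset ℕ) :
    (s.bind fun m => m.divisors.val).count d = s.countP (fun m => d ∣ m ∧ m ≠ 0) := by
  induction s using Multiset.induction_on with
  | empty => simp
  | cons m s ih =>
    rw [cons_bind, count_add, ih, countP_cons, count_eq_of_nodup m.divisors.nodup]
    simp only [Finset.mem_val, Nat.mem_divisors, add_comm]

theorem countP_dvd_mul_le_sum (d : ℕ) (s : Multiset ℕ) :
    s.countP (fun m => d ∣ m ∧ m ≠ 0) * d ≤ s.sum := by
  induction s using Multiset.induction_on with
  | empty => simp
  | cons m s ih =>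
    rw [countP_cons, sum_cons, add_mul]
    split_ifs with h
    · have := Nat.le_of_dvd (Nat.pos_of_ne_zero h.2) h.1
      omega
    · omega

end Multiset

open Multiset in
theorem countP_dvd_map_succ_range (n d : ℕ) :
    ((Finset.range n).val.map (· + 1)).countP (fun m => d ∣ m ∧ m ≠ 0) = n / d := by
  rw [countP_map, ← Nat.card_multiples]
  simp only [Nat.add_one_ne_zero, ne_eq, not_false_eq_true, and_true]
  rfl

theorem prod_X_pow_sub_one_dvd_prod_range {R : Type*} [CommRing R] {s : Multiset ℕ} {n : ℕ}
    (hs : ∀ m ∈ s, 0 < m) (hsum : s.sum ≤ n) :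
    (s.map fun m => (X : R[X]) ^ m - 1).prod ∣ ∏ i ∈ Finset.range n, ((X : R[X]) ^ (i + 1) - 1) := by
  have hrange : ∏ i ∈ Finset.range n, ((X : R[X]) ^ (i + 1) - 1)
      = (((Finset.range n).val.map (· + 1)).map fun m => (X : R[X]) ^ m - 1).prod := by
    rw [Multiset.map_map]; rfl
  rw [hrange, Multiset.prod_map_X_pow_sub_one_eq_prod_cyclotomic hs,
    Multiset.prod_map_X_pow_sub_one_eq_prod_cyclotomic (by simp)]
  refine Multiset.prod_dvd_prod_of_le (Multiset.map_le_map (Multiset.le_iff_count.mpr fun d => ?_))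
  rw [Multiset.count_bind_divisors, Multiset.count_bind_divisors, countP_dvd_map_succ_range]
  rcases Nat.eq_zero_or_pos d with rfl | hd
  · simp
  · exact (Nat.le_div_iff_mul_le hd).mpr ((Multiset.countP_dvd_mul_le_sum d s).trans hsum)

/-- For any partition `τ` of `n`, the polynomial `P(q) = ∏_{i=1}^n (q^i - 1)` is divisible
in `ℤ[q]` by `∏_{i} (q^{n_i} - 1)`, the product over the parts `n_i` of `τ`. -/
theorem parts_prod_dvd_P (n : ℕ) (τ : Nat.Partition n) :
    (Multiset.map (fun m => (X : ℤ[X]) ^ m - 1) τ.parts).prod ∣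
      ∏ i ∈ Finset.range n, ((X : ℤ[X]) ^ (i + 1) - 1) :=
  prod_X_pow_sub_one_dvd_prod_range (fun _ => τ.parts_pos) τ.parts_sum.le
end

section
/- For every n ≥ 1, the rank over ℚ of the matrix M(n) = (c(τ,y))_{τ⊢n, y∈ℕ}, whose rows are indexed by partitions τ of n and columns by non-negative integers y, with entries c(τ,y) = ∏_{i=1}^k (q^{n_i·y} + q^{n_i(y-1)} + ... + 1) ∈ ℚ[q], is at most (n^3 + n + 2)/2. -/
/-!
Over the fraction field of `ℚ[q]`, `c(τ, y) = ∏ (q^{n_i (y+1)} - 1) / (q^{n_i} - 1)` is a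
polynomial of degree `n` in `q^y`; since `1, q, …, q^n` are distinct, a combination of rows
vanishing in the columns `y ≤ n` vanishes. In column `y` every entry is palindromic of degree
`n y`, hence determined by its coefficients of `q^t`, `t ≤ n y / 2`. So the row space embeds into
`ℚ^d` with `d = ∑_{y ≤ n} (n y / 2 + 1) ≤ (n^3 + n + 2) / 2`.
-/

open Polynomial Finset Submodule Set

theorem SetLike.multiset_prod_map_mem_graded {ι R S ι' : Type*} [AddCommMonoid ι] [CommMonoid R]
    [SetLike S R] (A : ι → S) [SetLike.GradedMonoid A] (P : Multiset ι') (i : ι' → ι)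
    (r : ι' → R) (h : ∀ j ∈ P, r j ∈ A (i j)) : (P.map r).prod ∈ A (P.map i).sum := by
  induction P using Quotient.inductionOn with
  | h l => simpa using SetLike.list_prod_map_mem_graded l i r h

def geomSumProd {R : Type*} [CommSemiring R] (x : R) (P : Multiset ℕ) (y : ℕ) : R :=
  (P.map fun m => ∑ j ∈ range (y + 1), x ^ (m * j)).prod

theorem map_geomSumProd {R S : Type*} [CommSemiring R] [CommSemiring S] (φ : R →+* S) (x : R)
    (P : Multiset ℕ) (y : ℕ) : φ (geomSumProd x P y) = geomSumProd (φ x) P y := by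
  simp [geomSumProd, map_multiset_prod, Multiset.map_map]

namespace Polynomial

variable {R : Type*} [CommSemiring R]

variable (R) in
def palindromes (N : ℕ) : Submodule R R[X] where
  carrier := {p | p.natDegree ≤ N ∧ reflect N p = p}
  add_mem' := fun ⟨hpd, hpr⟩ ⟨hqd, hqr⟩ =>
    ⟨natDegree_add_le_of_degree_le hpd hqd, by rw [reflect_add, hpr, hqr]⟩
  zero_mem' := ⟨by simp, reflect_zero⟩
  smul_mem' c p := fun ⟨hpd, hpr⟩ => by
    refine ⟨(natDegree_smul_le c p).trans hpd, ?_⟩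
    rw [smul_eq_C_mul, reflect_C_mul, hpr]

instance : SetLike.GradedMonoid (palindromes R) where
  one_mem := ⟨by simp, by simp [reflect_one]⟩
  mul_mem := fun _ _ p q ⟨hpd, hpr⟩ ⟨hqd, hqr⟩ =>
    ⟨natDegree_mul_le_of_le hpd hqd, by rw [reflect_mul p q hpd hqd, hpr, hqr]⟩

theorem geom_sum_X_pow_mem_palindromes (m y : ℕ) :
    ∑ j ∈ range (y + 1), (X : R[X]) ^ (m * j) ∈ palindromes R (m * y) := by
  have hd (y : ℕ) : (∑ j ∈ range (y + 1), (X : R[X]) ^ (m * j)).natDegree ≤ m * y :=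
    natDegree_sum_le_of_forall_le _ _ fun j hj =>
      (natDegree_X_pow_le _).trans (Nat.mul_le_mul_left m (Nat.lt_succ_iff.mp (mem_range.mp hj)))
  refine ⟨hd y, ?_⟩
  induction y with
  | zero => simp [reflect_one]
  | succ y ih =>
    have h_cons : ∑ j ∈ range (y + 1 + 1), (X : R[X]) ^ (m * j) =
        X ^ m * ∑ j ∈ range (y + 1), (X : R[X]) ^ (m * j) + 1 := by
      simp [sum_range_succ' _ (y + 1), mul_sum, mul_add, pow_add, mul_comm]
    conv_lhs => rw [h_cons]
    rw [reflect_add, mul_add_one, add_comm (m * y), reflect_mul _ _ (natDegree_X_pow_le m) (hd y),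
      reflect_monomial, revAt_le le_rfl, Nat.sub_self, pow_zero, one_mul, ih, reflect_one,
      sum_range_succ _ (y + 1), mul_add_one, add_comm (m * y)]

theorem geomSumProd_X_mem_palindromes (P : Multiset ℕ) (y : ℕ) :
    geomSumProd (X : R[X]) P y ∈ palindromes R (P.sum * y) := by
  have h := SetLike.multiset_prod_map_mem_graded (palindromes R) P (· * y)
    (fun m => ∑ j ∈ range (y + 1), (X : R[X]) ^ (m * j))
    fun m _ => geom_sum_X_pow_mem_palindromes m y
  rwa [Multiset.sum_map_mul_right, Multiset.map_id'] at h

theorem eq_zero_of_mem_palindromes_of_coeff_eq_zero {N : ℕ} {p : R[X]}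
    (hp : p ∈ palindromes R N) (h : ∀ t ≤ N / 2, p.coeff t = 0) : p = 0 := by
  obtain ⟨hd, hr⟩ := hp
  ext i
  rw [coeff_zero]
  rcases le_or_gt i (N / 2) with hi | hi
  · exact h i hi
  rcases le_or_gt i N with hiN | hiN
  · rw [← hr, coeff_reflect, revAt_le hiN]
    exact h _ (by omega)
  · exact coeff_eq_zero_of_natDegree_lt (hd.trans_lt hiN)

end Polynomial

section ExpPolys

variable {K : Type*} [Field K]

noncomputable def expPolys (ξ : K) (N : ℕ) : Submodule K (ℕ → K) :=
  (degreeLE K N).map (LinearMap.pi fun y => leval (ξ ^ y))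

theorem mem_expPolys_of_natDegree_le {ξ : K} {N : ℕ} {f : ℕ → K} (R : K[X])
    (hR : R.natDegree ≤ N) (hf : ∀ y, f y = R.eval (ξ ^ y)) : f ∈ expPolys ξ N :=
  ⟨R, mem_degreeLE.mpr (natDegree_le_iff_degree_le.mp hR), funext fun y => (hf y).symm⟩

instance (ξ : K) : SetLike.GradedMonoid (expPolys ξ) where
  one_mem := mem_expPolys_of_natDegree_le 1 natDegree_one.le fun _ => eval_one.symm
  mul_mem := by
    rintro i j _ _ ⟨R, hR, rfl⟩ ⟨S, hS, rfl⟩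
    refine mem_expPolys_of_natDegree_le (R * S) (natDegree_mul_le_of_le ?_ ?_) fun y => ?_
    · exact natDegree_le_iff_degree_le.mpr (mem_degreeLE.mp hR)
    · exact natDegree_le_iff_degree_le.mpr (mem_degreeLE.mp hS)
    · simp

/-- `∑_{j ≤ y} (ξ^m)^j = ((ξ^m)^{y+1} - 1) / (ξ^m - 1)` is a polynomial of degree `m` in `ξ^y`. -/
theorem geom_sum_pow_mem_expPolys {ξ : K} {m : ℕ} (hm : ξ ^ m ≠ 1) :
    (fun y => ∑ j ∈ range (y + 1), ξ ^ (m * j)) ∈ expPolys ξ m := by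
  refine mem_expPolys_of_natDegree_le (C (ξ ^ m - 1)⁻¹ * (C (ξ ^ m) * X ^ m - 1))
    (by compute_degree) fun y => ?_
  have hsub : ξ ^ m - 1 ≠ 0 := sub_ne_zero.mpr hm
  simp only [pow_mul, geom_sum_eq hm, eval_mul, eval_C, eval_sub, eval_pow, eval_X, eval_one]
  field_simp
  ring

theorem geomSumProd_mem_expPolys {ξ : K} {P : Multiset ℕ} (hP : ∀ m ∈ P, ξ ^ m ≠ 1) :
    geomSumProd ξ P ∈ expPolys ξ P.sum := by
  have h := SetLike.multiset_prod_map_mem_graded (expPolys ξ) P id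
    (fun m y => ∑ j ∈ range (y + 1), ξ ^ (m * j)) fun m hm => geom_sum_pow_mem_expPolys (hP m hm)
  rw [Multiset.map_id] at h
  convert h using 1
  ext y
  simp [geomSumProd, Pi.multiset_prod_apply, Multiset.map_map]

theorem eq_zero_of_mem_expPolys {ξ : K} (hξ : Function.Injective (ξ ^ · : ℕ → K)) {N : ℕ}
    {f : ℕ → K} (hf : f ∈ expPolys ξ N) (h0 : ∀ y ≤ N, f y = 0) : f = 0 := by
  obtain ⟨R, hR, rfl⟩ := hf
  have hR0 : R = 0 := by
    refine eq_zero_of_natDegree_lt_card_of_eval_eq_zero R (f := fun y : Fin (N + 1) => ξ ^ (y : ℕ))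
      (hξ.comp Fin.val_injective) (fun y => h0 y (Nat.lt_succ_iff.mp y.2)) ?_
    rw [Fintype.card_fin, Nat.lt_succ_iff]
    exact natDegree_le_iff_degree_le.mpr (mem_degreeLE.mp hR)
  rw [hR0, map_zero]

end ExpPolys

section PartitionRows

variable {R : Type*}

theorem span_geomSumProd_le_pi_palindromes [CommSemiring R] (n : ℕ) :
    span R (range fun τ : Nat.Partition n => geomSumProd (X : R[X]) τ.parts) ≤
      Submodule.pi Set.univ fun y => palindromes R (n * y) := by
  rw [span_le, range_subset_iff]
  intro τ y _
  simpa [τ.parts_sum] using geomSumProd_X_mem_palindromes (R := R) τ.parts y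

theorem eq_zero_of_mem_span_geomSumProd [CommRing R] [IsDomain R] {n : ℕ} {f : ℕ → R[X]}
    (hf : f ∈ span R (range fun τ : Nat.Partition n => geomSumProd (X : R[X]) τ.parts))
    (h0 : ∀ y ≤ n, f y = 0) : f = 0 := by
  let K := FractionRing R[X]
  have hinj := IsFractionRing.injective R[X] K
  let Φ : (ℕ → R[X]) →ₗ[R] (ℕ → K) :=
    LinearMap.compLeft (IsScalarTower.toAlgHom R R[X] K).toLinearMap ℕ
  have hξ : Function.Injective (algebraMap R[X] K X ^ · : ℕ → K) := fun i j hij => by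
    simp only [← map_pow] at hij
    simpa using congrArg natDegree (hinj hij)
  have hspan : span R (range fun τ : Nat.Partition n => geomSumProd (X : R[X]) τ.parts) ≤
      ((expPolys (algebraMap R[X] K X) n).restrictScalars R).comap Φ := by
    rw [span_le, range_subset_iff]
    intro τ
    have hΦ : Φ (geomSumProd X τ.parts) = geomSumProd (algebraMap R[X] K X) τ.parts :=
      funext fun y => map_geomSumProd (algebraMap R[X] K) X τ.parts y
    have hpos : ∀ m ∈ τ.parts, algebraMap R[X] K X ^ m ≠ 1 := fun m hm h1 =>
      (τ.parts_pos hm).ne' (hξ (h1.trans (pow_zero _).symm))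
    simpa [hΦ, τ.parts_sum] using geomSumProd_mem_expPolys hpos
  have hΦf : Φ f = 0 :=
    eq_zero_of_mem_expPolys hξ (hspan hf) fun y hy => by simp [Φ, h0 y hy]
  exact funext fun y => hinj (by simpa [Φ] using congrFun hΦf y)

end PartitionRows

theorem sum_range_mul_div_two_add_one_le (n : ℕ) :
    ∑ y ∈ range (n + 1), (n * y / 2 + 1) ≤ (n ^ 3 + n + 2) / 2 := by
  rcases lt_or_ge n 2 with hn | hn
  · interval_cases n <;> decide
  rw [Nat.le_div_iff_mul_le two_pos, sum_mul]
  calc ∑ y ∈ range (n + 1), (n * y / 2 + 1) * 2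
      ≤ ∑ y ∈ range (n + 1), (n * y + 2) :=
        sum_le_sum fun y _ => by have := Nat.div_mul_le_self (n * y) 2; omega
    _ = n * ∑ y ∈ range (n + 1), y + 2 * (n + 1) := by
        rw [sum_add_distrib, mul_sum, sum_const, card_range, smul_eq_mul, mul_comm]
    _ ≤ n ^ 3 + n + 2 := by
        have hS := sum_range_id_mul_two (n + 1)
        rw [Nat.add_sub_cancel] at hS
        nlinarith [Nat.mul_le_mul hn hn]

theorem rank_M_le_general (n : ℕ) :
    Module.rank ℚ
      (Submodule.span ℚ (Set.range (fun τ : Nat.Partition n =>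
        (fun y : ℕ =>
          (Multiset.map (fun m => ∑ j ∈ Finset.range (y + 1), (X : ℚ[X]) ^ (m * j))
            τ.parts).prod : ℕ → ℚ[X]))))
      ≤ ((n ^ 3 + n + 2) / 2 : ℕ) := by
  change Module.rank ℚ (span ℚ (range fun τ : Nat.Partition n => geomSumProd (X : ℚ[X]) τ.parts))
    ≤ _
  set rows := span ℚ (range fun τ : Nat.Partition n => geomSumProd (X : ℚ[X]) τ.parts)
  let ι := Σ y : Fin (n + 1), Fin (n * y / 2 + 1)
  let T : (ℕ → ℚ[X]) →ₗ[ℚ] (ι → ℚ) :=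
    LinearMap.pi fun i => lcoeff ℚ i.2 ∘ₗ LinearMap.proj (i.1 : ℕ)
  have hT : Function.Injective (T ∘ₗ rows.subtype) := by
    refine (injective_iff_map_eq_zero _).mpr fun ⟨f, hf⟩ hTf => Subtype.ext ?_
    refine eq_zero_of_mem_span_geomSumProd hf fun y hy => ?_
    refine eq_zero_of_mem_palindromes_of_coeff_eq_zero
      (span_geomSumProd_le_pi_palindromes n hf y trivial) fun t ht => ?_
    exact congrFun hTf ⟨⟨y, Nat.lt_succ_of_le hy⟩, ⟨t, Nat.lt_succ_of_le ht⟩⟩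
  calc Module.rank ℚ rows ≤ Module.rank ℚ (ι → ℚ) := LinearMap.rank_le_of_injective _ hT
    _ = (∑ y ∈ range (n + 1), (n * y / 2 + 1) : ℕ) := by
        rw [rank_fun', Fintype.card_sigma, ← Fin.sum_univ_eq_sum_range]
        simp
    _ ≤ _ := by exact_mod_cast sum_range_mul_div_two_add_one_le n

/-- For every `n ≥ 1`, the rank over ℚ of the matrix `M(n) = (c(τ,y))` whose rows are indexed
by partitions `τ ⊢ n` and columns by `y ∈ ℕ`, with entries
`c(τ,y) = ∏_i (1 + q^{n_i} + q^{2n_i} + ⋯ + q^{n_i y}) ∈ ℚ[q]`, is at most `(n^3+n+2)/2`.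
Rows are viewed as elements of the ℚ-vector space of functions `ℕ → ℚ[q]`, and the rank is
the dimension of the span of the set of rows. -/
theorem rank_M_le (n : ℕ) (hn : 1 ≤ n) :
    Module.rank ℚ
      (Submodule.span ℚ (Set.range (fun τ : Nat.Partition n =>
        (fun y : ℕ =>
          (Multiset.map (fun m => ∑ j ∈ Finset.range (y + 1), (X : ℚ[X]) ^ (m * j))
            τ.parts).prod : ℕ → ℚ[X]))))
      ≤ ((n ^ 3 + n + 2) / 2 : ℕ) :=
  rank_M_le_general n
end

section
/- There exists n (e.g., any n ≥ 39) and rational numbers α_τ indexed by partitions τ of n, not all zero, such that ∑_{τ⊢n} α_τ · c(τ,y) is the zero polynomial in q for every non-negative integer y; i.e., the sequences (c(τ,y))_{y≥0} for τ ⊢ n are ℚ-linearly dependent. -/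
/-!
Put `u = q ^ (y + 1)` and `g p = (u ^ p - 1) / (q ^ p - 1)`, so that `c(τ, y) = ∏ g nᵢ`. After
dividing by `g 1 ^ 4 * g 2`, the six products `c(τ, y)` for `τ = 4 3 1³, 4 2² 1², 4 1⁶, 3 2³ 1,
3 2 1⁵, 2³ 1⁴` become the pairwise products of the four fractions `g 1 ^ 2`, `(g 2 / g 1) ^ 2`,
`g 3 / g 1`, `g 4 / g 2`, that is, of `(u ^ 2 + t * u + 1) / (q ^ 2 + t * q + 1)` for
`t = -2, 2, 1, 0`, and these six pairwise products satisfy a linear relation even when `u` and `q`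
are independent.
-/

open Polynomial

theorem mul_geom_sum_pow_mul {R : Type*} [CommRing R] (x : R) (p m : ℕ) :
    (x ^ p - 1) * ∑ j ∈ Finset.range m, x ^ (p * j) = (x ^ m) ^ p - 1 := by
  simp_rw [pow_mul]
  rw [mul_comm, geom_sum_mul, ← pow_mul, ← pow_mul, mul_comm]

namespace DependentPartitions

def τ₁ : Nat.Partition 10 := ⟨{4, 3, 1, 1, 1}, by decide, rfl⟩
def τ₂ : Nat.Partition 10 := ⟨{4, 2, 2, 1, 1}, by decide, rfl⟩
def τ₃ : Nat.Partition 10 := ⟨{4, 1, 1, 1, 1, 1, 1}, by decide, rfl⟩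
def τ₄ : Nat.Partition 10 := ⟨{3, 2, 2, 2, 1}, by decide, rfl⟩
def τ₅ : Nat.Partition 10 := ⟨{3, 2, 1, 1, 1, 1, 1}, by decide, rfl⟩
def τ₆ : Nat.Partition 10 := ⟨{2, 2, 2, 1, 1, 1, 1}, by decide, rfl⟩

def coeff : Nat.Partition 10 → ℚ :=
  Pi.single τ₁ 2 + Pi.single τ₂ (-3) + Pi.single τ₃ 1 + Pi.single τ₄ 1 + Pi.single τ₅ (-3) +
    Pi.single τ₆ 2

def combination {R : Type*} [CommRing R] (g : ℕ → R) : R :=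
  2 * (g 4 * g 3 * g 1 ^ 3) - 3 * (g 4 * g 2 ^ 2 * g 1 ^ 2) + g 4 * g 1 ^ 6
    + g 3 * g 2 ^ 3 * g 1 - 3 * (g 3 * g 2 * g 1 ^ 5) + 2 * (g 2 ^ 3 * g 1 ^ 4)

theorem coeff_ne_zero : coeff ≠ 0 :=
  Function.ne_iff.2 ⟨τ₁, by simp +decide [coeff]⟩

theorem sum_coeff_smul_prod_map_parts {A : Type*} [CommRing A] [Algebra ℚ A] (g : ℕ → A) :
    ∑ τ, coeff τ • (τ.parts.map g).prod = combination g := by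
  simp only [coeff, Pi.add_apply, add_smul, Finset.sum_add_distrib, Pi.single_apply, ite_smul,
    zero_smul, Finset.sum_ite_eq', Finset.mem_univ, if_true]
  simp [τ₁, τ₂, τ₃, τ₄, τ₅, τ₆, combination, Algebra.smul_def, map_ofNat]
  ring

theorem combination_eq_zero_of_mul_eq_pow_sub_one {R : Type*} [CommRing R] [IsDomain R]
    {u q : R} {g : ℕ → R} (hq : ∀ p ∈ Finset.Icc 1 4, q ^ p ≠ 1)
    (hg : ∀ p ∈ Finset.Icc 1 4, (q ^ p - 1) * g p = u ^ p - 1) :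
    combination g = 0 := by
  let φ := algebraMap R (FractionRing R)
  have hφ : Function.Injective φ := IsFractionRing.injective R _
  have hden : ∀ p ∈ Finset.Icc 1 4, φ q ^ p - 1 ≠ 0 := fun p hp => by
    rw [sub_ne_zero, ← map_pow, ← map_one φ, hφ.ne_iff]
    exact hq p hp
  have hφg : ∀ p ∈ Finset.Icc 1 4, φ (g p) = (φ u ^ p - 1) / (φ q ^ p - 1) := fun p hp =>
    eq_div_of_mul_eq (hden p hp) (by simpa [mul_comm] using congrArg φ (hg p hp))
  have h1 : φ q - 1 ≠ 0 := by simpa using hden 1 (by decide)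
  have h2 := hden 2 (by decide)
  have h3 := hden 3 (by decide)
  have h4 := hden 4 (by decide)
  apply hφ
  simp only [combination, map_add, map_sub, map_mul, map_pow, map_ofNat, map_zero]
  rw [hφg 1 (by decide), hφg 2 (by decide), hφg 3 (by decide), hφg 4 (by decide), pow_one,
    pow_one]
  field_simp
  ring

end DependentPartitions

/-- There exists `n` and rationals `α_τ` indexed by the partitions `τ ⊢ n`, not all zero, such
that `∑_{τ ⊢ n} α_τ · c(τ,y)` is the zero polynomial in `q` for every `y ∈ ℕ`, where
`c(τ,y) = ∏_i (q^{n_i y} + ⋯ + q^{n_i} + 1)`; i.e. the sequences `(c(τ,y))_{y ≥ 0}`, `τ ⊢ n`,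
are linearly dependent over ℚ. -/
theorem partitions_conjecture_false :
    ∃ n : ℕ, ∃ α : Nat.Partition n → ℚ, α ≠ 0 ∧ ∀ y : ℕ,
      ∑ τ : Nat.Partition n, α τ •
        (Multiset.map (fun p => ∑ j ∈ Finset.range (y + 1), (X : ℚ[X]) ^ (p * j))
          τ.parts).prod = 0 := by
  refine ⟨10, DependentPartitions.coeff, DependentPartitions.coeff_ne_zero, fun y => ?_⟩
  have hX : ∀ p ∈ Finset.Icc 1 4, (X : ℚ[X]) ^ p ≠ 1 := fun p hp h => by
    simpa [Nat.one_le_iff_ne_zero.1 (Finset.mem_Icc.1 hp).1] using congrArg natDegree h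
  rw [DependentPartitions.sum_coeff_smul_prod_map_parts]
  exact DependentPartitions.combination_eq_zero_of_mul_eq_pow_sub_one hX
    fun p _ => mul_geom_sum_pow_mul X p (y + 1)
end

section
/- For a vertex-weighted graph G with weight function ω: V → ℕ and a non-loop edge e, the (r,q)-chromatic function satisfies the deletion-contraction identity M^ω_{r,q}(G;k) = M^ω_{r,q}(G−e;k) − M^ω_{r,q}(G/e;k), where in G/e the new vertex obtained by contracting e = uv gets weight ω(u)+ω(v). -/
open scoped Classical

/-- A (multi)graph with vertex set a finite set of naturals, edge labels a finite set of
naturals, each edge having an unordered pair of endpoints lying in the vertex set, and a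
vertex-weight function. -/
structure WGraph where
  verts : Finset ℕ
  edges : Finset ℕ
  ends : ℕ → Sym2 ℕ
  ends_mem : ∀ e ∈ edges, ∀ v ∈ ends e, v ∈ verts
  w : ℕ → ℕ

namespace WGraph

/-- Two vertices are joined in the spanning subgraph with edge set `A`. -/
def adj (G : WGraph) (A : Finset ℕ) (u v : ℕ) : Prop := ∃ i ∈ A, G.ends i = s(u, v)

/-- Reachability in the spanning subgraph with edge set `A`. -/
def reach (G : WGraph) (A : Finset ℕ) : ℕ → ℕ → Prop := Relation.ReflTransGen (G.adj A)

/-- The set of connected components of the spanning subgraph `(V, A)`. -/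
noncomputable def components (G : WGraph) (A : Finset ℕ) : Finset (Finset ℕ) :=
  G.verts.image (fun v => G.verts.filter (G.reach A v))

/-- The total weight of a set of vertices. -/
def wt (G : WGraph) (C : Finset ℕ) : ℕ := ∑ v ∈ C, G.w v

/-- All `k`-colourings: maps `V → {0, …, k-1}`, extended by `0` off the vertex set. -/
def allCol (G : WGraph) (k : ℕ) : Set (ℕ → ℕ) :=
  {s | (∀ v ∈ G.verts, s v < k) ∧ ∀ v ∉ G.verts, s v = 0}

/-- Proper `k`-colourings: no edge is monochromatic. -/
def properCol (G : WGraph) (k : ℕ) : Set (ℕ → ℕ) :=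
  {s ∈ G.allCol k | ∀ e ∈ G.edges, ∀ a b : ℕ, G.ends e = s(a, b) → s a ≠ s b}

/-- The weighted `(r,q)`-chromatic function
`M^ω_{r,q}(G;k) = ∑_{s ∈ col(G;k)} r^{∑_{v ∈ V} ω(v) q^{s(v)}}`. -/
noncomputable def Mw (G : WGraph) (r q : ℝ) (k : ℕ) : ℝ :=
  ∑ᶠ s ∈ G.properCol k, r ^ (∑ v ∈ G.verts, (G.w v : ℝ) * q ^ (s v))

/-- The unweighted `(r,q)`-chromatic function
`M_{r,q}(G;k) = ∑_{s ∈ col(G;k)} r^{∑_{v ∈ V} q^{s(v)}}`. -/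
noncomputable def M (G : WGraph) (r q : ℝ) (k : ℕ) : ℝ :=
  ∑ᶠ s ∈ G.properCol k, r ^ (∑ v ∈ G.verts, q ^ (s v))

/-- The weighted `(r,q)`-dichromatic function
`B^ω_{r,q}(G;x,k) = ∑_{A ⊆ E} x^{|A|} ∏_{C ∈ com(A)} ∑_{i=0}^{k-1} r^{ω(C) q^i}`. -/
noncomputable def Bw (G : WGraph) (r q x : ℝ) (k : ℕ) : ℝ :=
  ∑ A ∈ G.edges.powerset, x ^ A.card *
    ∏ C ∈ G.components A, ∑ i ∈ Finset.range k, r ^ ((G.wt C : ℝ) * q ^ i)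

/-- The unweighted `(r,q)`-dichromatic function
`B_{r,q}(G;x,k) = ∑_{A ⊆ E} x^{|A|} ∏_{C ∈ com(A)} ∑_{i=0}^{k-1} r^{|C| q^i}`. -/
noncomputable def B (G : WGraph) (r q x : ℝ) (k : ℕ) : ℝ :=
  ∑ A ∈ G.edges.powerset, x ^ A.card *
    ∏ C ∈ G.components A, ∑ i ∈ Finset.range k, r ^ ((C.card : ℝ) * q ^ i)

/-- Deletion of an edge. -/
def delete (G : WGraph) (e : ℕ) : WGraph where
  verts := G.verts
  edges := G.edges.erase e
  ends := G.ends
  ends_mem := fun i hi => G.ends_mem i (Finset.mem_of_mem_erase hi)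
  w := G.w

/-- Contraction of a non-loop edge `e` with ends `a`, `b`: the vertex `b` is merged into `a`,
whose new weight is `ω(a) + ω(b)`. -/
def contract (G : WGraph) (e a b : ℕ) : WGraph where
  verts := insert a (G.verts.erase b)
  edges := G.edges.erase e
  ends := fun i => (G.ends i).map (fun v => if v = b then a else v)
  ends_mem := by
    intro i hi v hv
    rcases Sym2.mem_map.1 hv with ⟨u, hu, rfl⟩
    by_cases h : u = b
    · simp [h]
    · simp only [if_neg h]
      exact Finset.mem_insert_of_mem
        (Finset.mem_erase.2 ⟨h, G.ends_mem i (Finset.mem_of_mem_erase hi) u hu⟩)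
  w := fun v => if v = a then G.w a + G.w b else G.w v

end WGraph

open WGraph

/-!
Proper colourings of `G - e` split into those that are proper for `G` and those giving `a` and `b`
the same colour. The latter are exactly the pullbacks `t ∘ σ` of proper colourings `t` of `G / e`
along the vertex map `σ` sending `b` to `a`, and since the merged vertex carries the weight
`ω(a) + ω(b)`, pulling back preserves the summand `r ^ ∑ ω(v) q ^ t(v)`.
-/

namespace WGraph

theorem allCol_finite (G : WGraph) (k : ℕ) : (G.allCol k).Finite := by
  have hinj : Set.InjOn
      (fun s : ℕ → ℕ => fun v : G.verts => (⟨min (s v) k, by omega⟩ : Fin (k + 1)))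
      (G.allCol k) := by
    intro s hs t ht h
    funext v
    by_cases hv : v ∈ G.verts
    · have := congrArg Fin.val (congrFun h ⟨v, hv⟩)
      simpa [min_eq_left (hs.1 v hv).le, min_eq_left (ht.1 v hv).le] using this
    · rw [hs.2 v hv, ht.2 v hv]
  exact Set.Finite.of_finite_image (Set.toFinite _) hinj

theorem properCol_finite (G : WGraph) (k : ℕ) : (G.properCol k).Finite :=
  (G.allCol_finite k).subset fun _ hs => hs.1

def contractMap (a b v : ℕ) : ℕ := if v = b then a else v

section contractMap

variable {a b : ℕ}

theorem contractMap_right (a b : ℕ) : contractMap a b b = a := if_pos rfl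

theorem contractMap_of_ne {v : ℕ} (hv : v ≠ b) : contractMap a b v = v := if_neg hv

theorem contractMap_ne (hab : a ≠ b) (v : ℕ) : contractMap a b v ≠ b := by
  unfold contractMap
  split_ifs with h
  · exact hab
  · exact h

theorem update_comp_contractMap {s : ℕ → ℕ} (hab : a ≠ b) (hs : s a = s b) :
    Function.update s b 0 ∘ contractMap a b = s := by
  funext v
  rw [Function.comp_apply, Function.update_of_ne (contractMap_ne hab v)]
  by_cases hv : v = b
  · rw [hv, contractMap_right, hs]
  · rw [contractMap_of_ne hv]

end contractMap

section deletionContraction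

variable {G : WGraph} {e a b : ℕ}

theorem contract_ends (i : ℕ) : (G.contract e a b).ends i = (G.ends i).map (contractMap a b) :=
  rfl

theorem contract_verts (hab : a ≠ b) (ha : a ∈ G.verts) :
    (G.contract e a b).verts = G.verts.erase b :=
  Finset.insert_eq_self.2 (Finset.mem_erase.2 ⟨hab, ha⟩)

theorem properCol_eq_properCol_delete_diff (he : e ∈ G.edges) (hends : G.ends e = s(a, b))
    (k : ℕ) : G.properCol k = (G.delete e).properCol k \ {s | s a = s b} := by
  ext s
  refine ⟨fun hs => ⟨⟨hs.1, fun i hi => hs.2 i (Finset.mem_of_mem_erase hi)⟩,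
    hs.2 e he a b hends⟩, fun ⟨hs, hab⟩ => ⟨hs.1, fun i hi x y hxy => ?_⟩⟩
  by_cases hie : i = e
  · subst hie
    rcases Sym2.eq_iff.1 (hends.symm.trans hxy) with ⟨rfl, rfl⟩ | ⟨rfl, rfl⟩
    · exact hab
    · exact Ne.symm hab
  · exact hs.2 i (Finset.mem_erase.2 ⟨hie, hi⟩) x y hxy

theorem comp_contractMap_mem_allCol (hab : a ≠ b) (ha : a ∈ G.verts) (hb : b ∈ G.verts)
    {t : ℕ → ℕ} {k : ℕ} (ht : t ∈ (G.contract e a b).allCol k) :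
    t ∘ contractMap a b ∈ G.allCol k := by
  rw [allCol, contract_verts hab ha] at ht
  refine ⟨fun v hv => ht.1 _ ?_, fun v hv => ?_⟩
  · by_cases hvb : v = b
    · rw [hvb, contractMap_right]
      exact Finset.mem_erase.2 ⟨hab, ha⟩
    · rw [contractMap_of_ne hvb]
      exact Finset.mem_erase.2 ⟨hvb, hv⟩
  · have hvb : v ≠ b := fun h => hv (h ▸ hb)
    rw [Function.comp_apply, contractMap_of_ne hvb]
    exact ht.2 v fun h => hv (Finset.mem_of_mem_erase h)

theorem update_mem_allCol_contract (hab : a ≠ b) (ha : a ∈ G.verts) {s : ℕ → ℕ} {k : ℕ}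
    (hs : s ∈ G.allCol k) : Function.update s b 0 ∈ (G.contract e a b).allCol k := by
  rw [allCol, contract_verts hab ha]
  refine ⟨fun v hv => ?_, fun v hv => ?_⟩
  · rw [Function.update_of_ne (Finset.ne_of_mem_erase hv)]
    exact hs.1 v (Finset.mem_of_mem_erase hv)
  · by_cases hvb : v = b
    · rw [hvb, Function.update_self]
    · rw [Function.update_of_ne hvb]
      exact hs.2 v fun h => hv (Finset.mem_erase.2 ⟨hvb, h⟩)

theorem properEdges_contract_iff (t : ℕ → ℕ) :
    (∀ i ∈ (G.contract e a b).edges, ∀ x y, (G.contract e a b).ends i = s(x, y) → t x ≠ t y) ↔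
      ∀ i ∈ (G.delete e).edges, ∀ u v, (G.delete e).ends i = s(u, v) →
        t (contractMap a b u) ≠ t (contractMap a b v) := by
  refine ⟨fun h i hi u v huv => h i hi _ _ ?_, fun h i hi x y hxy => ?_⟩
  · rw [contract_ends, show G.ends i = s(u, v) from huv]
    rfl
  · induction hG : G.ends i using Sym2.ind with
    | _ u v =>
      rw [contract_ends, hG, Sym2.map_mk] at hxy
      rcases Sym2.eq_iff.1 hxy.symm with ⟨rfl, rfl⟩ | ⟨rfl, rfl⟩
      · exact h i hi u v hG
      · exact (h i hi u v hG).symm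

theorem image_comp_contractMap_properCol_contract (hab : a ≠ b) (ha : a ∈ G.verts)
    (hb : b ∈ G.verts) (k : ℕ) :
    (· ∘ contractMap a b) '' (G.contract e a b).properCol k =
      (G.delete e).properCol k ∩ {s | s a = s b} := by
  ext s
  constructor
  · rintro ⟨t, ⟨htcol, htedges⟩, rfl⟩
    refine ⟨⟨comp_contractMap_mem_allCol hab ha hb htcol,
      (properEdges_contract_iff t).1 htedges⟩, ?_⟩
    show t (contractMap a b a) = t (contractMap a b b)
    rw [contractMap_of_ne hab, contractMap_right]
  · rintro ⟨⟨hscol, hsedges⟩, hsab⟩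
    have hcomp := update_comp_contractMap hab hsab
    refine ⟨Function.update s b 0, ⟨update_mem_allCol_contract hab ha hscol, ?_⟩, hcomp⟩
    refine (properEdges_contract_iff _).2 fun i hi u v huv => ?_
    simpa only [← Function.comp_apply (f := Function.update s b 0), hcomp]
      using hsedges i hi u v huv

theorem injOn_comp_contractMap (hab : a ≠ b) (k : ℕ) :
    Set.InjOn (· ∘ contractMap a b) ((G.contract e a b).allCol k) := by
  intro t ht t' ht' h
  funext v
  by_cases hvb : v = b
  · have hb : b ∉ (G.contract e a b).verts := by simp [contract, Ne.symm hab]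
    rw [hvb, ht.2 b hb, ht'.2 b hb]
  · simpa [contractMap_of_ne hvb] using congrFun h v

theorem sum_contract_w_mul (hab : a ≠ b) (ha : a ∈ G.verts) (hb : b ∈ G.verts)
    (g : ℕ → ℝ) :
    ∑ v ∈ (G.contract e a b).verts, ((G.contract e a b).w v : ℝ) * g v =
      ∑ v ∈ G.verts, (G.w v : ℝ) * g (contractMap a b v) := by
  have ha' : a ∈ G.verts.erase b := Finset.mem_erase.2 ⟨hab, ha⟩
  have hrest : ∀ v ∈ (G.verts.erase b).erase a,
      ((G.contract e a b).w v : ℝ) * g v = (G.w v : ℝ) * g (contractMap a b v) := by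
    intro v hv
    rw [contractMap_of_ne (Finset.ne_of_mem_erase (Finset.mem_of_mem_erase hv))]
    simp [contract, Finset.ne_of_mem_erase hv]
  rw [contract_verts hab ha, ← Finset.add_sum_erase _ _ ha', Finset.sum_congr rfl hrest,
    ← Finset.add_sum_erase _ _ hb, ← Finset.add_sum_erase _ _ ha']
  simp only [contract, if_pos, contractMap_right, contractMap_of_ne hab]
  push_cast
  ring

theorem Mw_contract (hab : a ≠ b) (ha : a ∈ G.verts) (hb : b ∈ G.verts) (r q : ℝ) (k : ℕ) :
    (G.contract e a b).Mw r q k = ∑ᶠ s ∈ (G.delete e).properCol k ∩ {s | s a = s b},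
      r ^ (∑ v ∈ G.verts, (G.w v : ℝ) * q ^ (s v)) := by
  rw [← image_comp_contractMap_properCol_contract hab ha hb,
    finsum_mem_image ((injOn_comp_contractMap hab k).mono fun _ ht => ht.1), Mw]
  refine finsum_mem_congr rfl fun t _ => ?_
  rw [sum_contract_w_mul hab ha hb (fun v => q ^ t v)]
  rfl

end deletionContraction

end WGraph

theorem Mw_deletion_contraction_general (G : WGraph) (e a b : ℕ) (he : e ∈ G.edges)
    (hab : a ≠ b) (hends : G.ends e = s(a, b)) (r q : ℝ) (k : ℕ) :
    G.Mw r q k = (G.delete e).Mw r q k - (G.contract e a b).Mw r q k := by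
  have ha : a ∈ G.verts := G.ends_mem e he a (hends ▸ Sym2.mem_mk_left a b)
  have hb : b ∈ G.verts := G.ends_mem e he b (hends ▸ Sym2.mem_mk_right a b)
  rw [eq_sub_iff_add_eq, Mw_contract hab ha hb, Mw, Mw,
    properCol_eq_properCol_delete_diff he hends, add_comm,
    finsum_mem_inter_add_sdiff _ ((G.delete e).properCol_finite k)]
  rfl

/-- Deletion–contraction for the weighted `(r,q)`-chromatic function: for a non-loop edge
`e = ab`, `M^ω_{r,q}(G;k) = M^ω_{r,q}(G−e;k) − M^ω_{r,q}(G/e;k)`, where in `G/e` the new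
vertex gets weight `ω(a)+ω(b)`. -/
theorem Mw_deletion_contraction (G : WGraph) (e a b : ℕ) (he : e ∈ G.edges)
    (hab : a ≠ b) (hends : G.ends e = s(a, b)) (r q : ℝ) (hr : 0 < r) (k : ℕ) :
    G.Mw r q k = (G.delete e).Mw r q k - (G.contract e a b).Mw r q k :=
  Mw_deletion_contraction_general G e a b he hab hends r q k
end

section
/- For a vertex-weighted graph G = (V,E) with weight function ω: V → ℕ, the (r,q)-chromatic function has the spanning-subgraph expansion M^ω_{r,q}(G;k) = ∑_{A ⊆ E} (−1)^{|A|} ∏_{C ∈ com(A)} ∑_{i=0}^{k−1} r^{ω(C)·q^i}, where com(A) is the set of connected components of the spanning subgraph (V,A) and ω(C) = ∑_{v∈C} ω(v). -/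
/-!
For a colouring `s`, let `M(s)` be its set of monochromatic edges. Expanding the product over
the components of `(V, A)` gives the total weight `r^{∑ ω(v) q^{s(v)}}` of the colourings that
are constant on every component, i.e. those with `A ⊆ M(s)`. Exchanging the two sums, each
colouring is counted with the factor `∑_{A ⊆ M(s)} (-1)^{|A|}`, which is `1` when `M(s) = ∅`,
i.e. when `s` is proper, and `0` otherwise.
-/

open scoped Classical

open WGraph

namespace WGraph

open Finset

variable {G : WGraph} {A : Finset ℕ}

noncomputable def component (G : WGraph) (A : Finset ℕ) (v : ℕ) : Finset ℕ :=
  G.verts.filter (G.reach A v)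

lemma adj_symm {u v : ℕ} (h : G.adj A u v) : G.adj A v u :=
  let ⟨i, hi, he⟩ := h
  ⟨i, hi, he.trans Sym2.eq_swap⟩

lemma reach_symm {u v : ℕ} (h : G.reach A u v) : G.reach A v u := by
  induction h with
  | refl => exact .refl
  | tail _ huv ih => exact .head (adj_symm huv) ih

lemma mem_component {u v : ℕ} : v ∈ G.component A u ↔ v ∈ G.verts ∧ G.reach A u v :=
  mem_filter

lemma mem_component_self {v : ℕ} (hv : v ∈ G.verts) : v ∈ G.component A v :=
  mem_component.2 ⟨hv, .refl⟩

lemma component_eq_of_reach {u v : ℕ} (h : G.reach A u v) :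
    G.component A u = G.component A v := by
  ext w
  simp only [mem_component, and_congr_right_iff]
  exact fun _ => ⟨(reach_symm h).trans, h.trans⟩

lemma component_mem_components {v : ℕ} (hv : v ∈ G.verts) :
    G.component A v ∈ G.components A :=
  mem_image_of_mem _ hv

lemma component_eq_of_mem {C : Finset ℕ} (hC : C ∈ G.components A) {v : ℕ} (hv : v ∈ C) :
    G.component A v = C := by
  obtain ⟨u, -, rfl⟩ := mem_image.1 hC
  exact (component_eq_of_reach (mem_component.1 hv).2).symm

lemma subset_verts_of_mem_components {C : Finset ℕ} (hC : C ∈ G.components A) :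
    C ⊆ G.verts := by
  obtain ⟨u, -, rfl⟩ := mem_image.1 hC
  exact filter_subset _ _

lemma nonempty_of_mem_components {C : Finset ℕ} (hC : C ∈ G.components A) : C.Nonempty := by
  obtain ⟨u, hu, rfl⟩ := mem_image.1 hC
  exact ⟨u, mem_component_self hu⟩

variable (A) in
lemma sum_components_sum {M : Type*} [AddCommMonoid M] (f : ℕ → M) :
    ∑ C ∈ G.components A, ∑ v ∈ C, f v = ∑ v ∈ G.verts, f v := by
  refine sum_image' _ fun u hu => sum_congr (filter_congr fun v hv => ?_) fun _ _ => rfl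
  refine ⟨fun h => (component_eq_of_reach h).symm, fun h => ?_⟩
  have h : G.component A v = G.component A u := h
  exact (mem_component.1 (h ▸ mem_component_self hv)).2

noncomputable def colorings (G : WGraph) (k : ℕ) : Finset (ℕ → ℕ) :=
  (G.verts.pi fun _ => range k).image fun f v => if h : v ∈ G.verts then f v h else 0

lemma mem_colorings {k : ℕ} {s : ℕ → ℕ} : s ∈ G.colorings k ↔ s ∈ G.allCol k := by
  simp only [colorings, mem_image, mem_pi, mem_range, allCol, Set.mem_ofPred_eq]
  constructor
  · rintro ⟨f, hf, rfl⟩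
    exact ⟨fun v hv => by simpa [dif_pos hv] using hf v hv, fun v hv => by simp [dif_neg hv]⟩
  · rintro ⟨hlt, hzero⟩
    refine ⟨fun v _ => s v, hlt, funext fun v => ?_⟩
    by_cases hv : v ∈ G.verts
    · simp [dif_pos hv]
    · simp [dif_neg hv, hzero v hv]

def IsMonochromatic (G : WGraph) (s : ℕ → ℕ) (e : ℕ) : Prop :=
  ∀ a b, G.ends e = s(a, b) → s a = s b

noncomputable def monoEdges (G : WGraph) (s : ℕ → ℕ) : Finset ℕ :=
  G.edges.filter (G.IsMonochromatic s)

lemma monoEdges_subset (s : ℕ → ℕ) : G.monoEdges s ⊆ G.edges :=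
  filter_subset _ _

lemma not_isMonochromatic_iff {s : ℕ → ℕ} {e : ℕ} :
    ¬G.IsMonochromatic s e ↔ ∀ a b, G.ends e = s(a, b) → s a ≠ s b := by
  constructor
  · intro h a b hab hs
    refine h fun a' b' hab' => ?_
    rcases Sym2.eq_iff.1 (hab'.symm.trans hab) with ⟨rfl, rfl⟩ | ⟨rfl, rfl⟩
    exacts [hs, hs.symm]
  · intro h hmono
    induction hab : G.ends e using Sym2.ind with
    | h a b => exact h a b hab (hmono a b hab)

lemma mem_properCol_iff {k : ℕ} {s : ℕ → ℕ} :
    s ∈ G.properCol k ↔ s ∈ G.colorings k ∧ G.monoEdges s = ∅ := by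
  simp only [properCol, Set.mem_ofPred_eq, mem_colorings, monoEdges, filter_eq_empty_iff,
    not_isMonochromatic_iff]

lemma eq_of_reach {s : ℕ → ℕ} (hA : A ⊆ G.monoEdges s) {u v : ℕ} (h : G.reach A u v) :
    s u = s v := by
  induction h with
  | refl => rfl
  | tail _ huv ih =>
    obtain ⟨e, he, hends⟩ := huv
    exact ih.trans ((mem_filter.1 (hA he)).2 _ _ hends)

noncomputable def coloringWeight (G : WGraph) (r q : ℝ) (s : ℕ → ℕ) : ℝ :=
  r ^ (∑ v ∈ G.verts, (G.w v : ℝ) * q ^ s v)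

lemma Mw_eq_sum_colorings (r q : ℝ) (k : ℕ) :
    G.Mw r q k = ∑ s ∈ G.colorings k with G.monoEdges s = ∅, G.coloringWeight r q s := by
  rw [Mw, ← finsum_mem_coe_finset]
  congr! 2 with s
  simp [mem_properCol_iff, coloringWeight]

section extendColoring

noncomputable def extendColoring (G : WGraph) (A : Finset ℕ) (p : G.components A → ℕ) (v : ℕ) : ℕ :=
  if h : v ∈ G.verts then p ⟨G.component A v, component_mem_components h⟩ else 0

variable {p : G.components A → ℕ}

lemma extendColoring_of_mem {C : Finset ℕ} (hC : C ∈ G.components A) {v : ℕ} (hv : v ∈ C) :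
    G.extendColoring A p v = p ⟨C, hC⟩ := by
  rw [extendColoring, dif_pos (subset_verts_of_mem_components hC hv)]
  exact congrArg p (Subtype.ext (component_eq_of_mem hC hv))

lemma extendColoring_mem_colorings {k : ℕ} (hp : ∀ C, p C < k) :
    G.extendColoring A p ∈ G.colorings k := by
  refine mem_colorings.2 ⟨fun v hv => ?_, fun v hv => dif_neg hv⟩
  rw [extendColoring, dif_pos hv]
  exact hp _

lemma subset_monoEdges_extendColoring (hA : A ⊆ G.edges) :
    A ⊆ G.monoEdges (G.extendColoring A p) := by
  intro e he
  refine mem_filter.2 ⟨hA he, fun a b hends => ?_⟩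
  have hab : G.reach A a b := .single ⟨e, he, hends⟩
  have ha : a ∈ G.verts := G.ends_mem e (hA he) a (hends ▸ Sym2.mem_mk_left a b)
  have hb : b ∈ G.verts := G.ends_mem e (hA he) b (hends ▸ Sym2.mem_mk_right a b)
  have hC := component_mem_components (A := A) ha
  rw [extendColoring_of_mem hC (mem_component_self ha),
    extendColoring_of_mem hC (mem_component.2 ⟨hb, hab⟩)]

lemma coloringWeight_extendColoring {r : ℝ} (hr : 0 < r) (q : ℝ) :
    G.coloringWeight r q (G.extendColoring A p) =
      ∏ C : G.components A, r ^ ((G.wt C : ℝ) * q ^ p C) := by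
  rw [coloringWeight, ← sum_components_sum A, ← sum_coe_sort, Real.rpow_sum_of_pos hr]
  refine prod_congr rfl fun C _ => ?_
  rw [wt, Nat.cast_sum, sum_mul]
  refine congrArg _ (sum_congr rfl fun v hv => ?_)
  rw [extendColoring_of_mem C.2 hv]

noncomputable def restrictColoring (G : WGraph) (A : Finset ℕ) (s : ℕ → ℕ) (C : G.components A) : ℕ :=
  s (C.1.min' (nonempty_of_mem_components C.2))

lemma restrictColoring_extendColoring : G.restrictColoring A (G.extendColoring A p) = p :=
  funext fun C => extendColoring_of_mem C.2 (min'_mem _ _)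

lemma extendColoring_restrictColoring {k : ℕ} {s : ℕ → ℕ} (hs : s ∈ G.colorings k)
    (hA : A ⊆ G.monoEdges s) : G.extendColoring A (G.restrictColoring A s) = s := by
  funext v
  by_cases hv : v ∈ G.verts
  · rw [extendColoring_of_mem (component_mem_components hv) (mem_component_self hv)]
    exact (eq_of_reach hA (mem_component.1 (min'_mem _ _)).2).symm
  · rw [extendColoring, dif_neg hv, (mem_colorings.1 hs).2 v hv]

end extendColoring

lemma prod_components_sum_range {r : ℝ} (hr : 0 < r) (q : ℝ) (k : ℕ) (hA : A ⊆ G.edges) :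
    ∏ C ∈ G.components A, ∑ i ∈ range k, r ^ ((G.wt C : ℝ) * q ^ i) =
      ∑ s ∈ G.colorings k with A ⊆ G.monoEdges s, G.coloringWeight r q s := by
  rw [← prod_coe_sort, prod_univ_sum]
  refine sum_nbij' (G.extendColoring A) (G.restrictColoring A) (fun p hp => ?_) (fun s hs => ?_)
    (fun p _ => restrictColoring_extendColoring) (fun s hs => ?_)
    (fun p _ => (coloringWeight_extendColoring hr q).symm)
  · simp only [Fintype.mem_piFinset, mem_range] at hp
    exact mem_filter.2 ⟨extendColoring_mem_colorings hp, subset_monoEdges_extendColoring hA⟩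
  · obtain ⟨hs, -⟩ := mem_filter.1 hs
    refine Fintype.mem_piFinset.2 fun C => mem_range.2 ((mem_colorings.1 hs).1 _ ?_)
    exact subset_verts_of_mem_components C.2 (min'_mem _ _)
  · obtain ⟨hs, hA⟩ := mem_filter.1 hs
    exact extendColoring_restrictColoring hs hA

end WGraph

lemma Finset.sum_powerset_filter_subset_neg_one_pow {α R : Type*} [DecidableEq α] [Ring R]
    {M E : Finset α} (h : M ⊆ E) :
    ∑ A ∈ E.powerset with A ⊆ M, (-1 : R) ^ A.card = if M = ∅ then 1 else 0 := by
  have hfilter : E.powerset.filter (· ⊆ M) = M.powerset := by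
    ext A
    simpa [mem_powerset] using fun hA => hA.trans h
  rw [hfilter]
  exact_mod_cast congrArg (Int.cast (R := R)) (sum_powerset_neg_one_pow_card (x := M))

/-- Spanning-subgraph expansion of the weighted `(r,q)`-chromatic function:
`M^ω_{r,q}(G;k) = ∑_{A ⊆ E} (−1)^{|A|} ∏_{C ∈ com(A)} ∑_{i=0}^{k−1} r^{ω(C) q^i}`. -/
theorem Mw_subgraph_expansion (G : WGraph) (r q : ℝ) (hr : 0 < r) (k : ℕ) :
    G.Mw r q k =
      ∑ A ∈ G.edges.powerset, (-1 : ℝ) ^ A.card *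
        ∏ C ∈ G.components A, ∑ i ∈ Finset.range k, r ^ ((G.wt C : ℝ) * q ^ i) := by
  calc G.Mw r q k
      = ∑ s ∈ G.colorings k, ∑ A ∈ G.edges.powerset with A ⊆ G.monoEdges s,
          (-1 : ℝ) ^ A.card * G.coloringWeight r q s := by
        rw [Mw_eq_sum_colorings, Finset.sum_filter]
        refine Finset.sum_congr rfl fun s _ => ?_
        rw [← Finset.sum_mul, Finset.sum_powerset_filter_subset_neg_one_pow
          (monoEdges_subset s), ite_mul, one_mul, zero_mul]
    _ = _ := by
        simp only [Finset.sum_filter]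
        rw [Finset.sum_comm]
        refine Finset.sum_congr rfl fun A hA => ?_
        rw [prod_components_sum_range hr q k (Finset.mem_powerset.1 hA), Finset.mul_sum,
          Finset.sum_filter]
end

section
/- Let r > 1 be real, k, b ∈ ℕ, and let G be a graph on |V| vertices. The coefficient of t^b in B_{r,q}(G; t−1, k), viewed as a function of q, can be uniquely written in the form ∑_c a_c · r^{∑_i c_i q^i}, where the sum is over vectors c = (c_0,...,c_{k−1}) of non-negative integers with ∑_i c_i = |V|, and a_c ∈ ℕ. Equivalently: if S is a non-empty finite set of such vectors and a_c are non-zero integers for c ∈ S, then the function F(q) = ∑_{c∈S} a_c·r^{∑_i c_i q^i} of a real variable q is not identically zero. -/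
/-!
Order the vectors `c` colexicographically and let `c₀` be the largest one in `S`. For any other
`c ∈ S`, let `m` be the top index where `c` and `c₀` differ; then `c m < c₀ m`, and `m ≠ 0`
because `c` and `c₀` have the same sum. So `∑ i, (c₀ i - c i) q ^ i` is a polynomial of degree
`m ≥ 1` with positive leading coefficient, and `r ^ (∑ i, c i q ^ i) / r ^ (∑ i, c₀ i q ^ i) → 0`
as `q → ∞`. Dividing `F` by `r ^ (∑ i, c₀ i q ^ i)` thus gives a function tending to `a c₀ ≠ 0`.
-/

open Finset Filter Polynomial Topology

theorem eventually_sum_mul_rpow_ne_zero {α ι : Type*} {l : Filter α} {r : ℝ} (hr : 1 < r)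
    {S : Finset ι} {a : ι → ℝ} {p : ι → α → ℝ} {c₀ : ι} (hc₀ : c₀ ∈ S) (ha : a c₀ ≠ 0)
    (hdom : ∀ c ∈ S, c ≠ c₀ → Tendsto (fun x => p c₀ x - p c x) l atTop) :
    ∀ᶠ x in l, ∑ c ∈ S, a c * r ^ p c x ≠ 0 := by
  classical
  have hr₀ : 0 < r := zero_lt_one.trans hr
  have hlim : Tendsto (fun x => ∑ c ∈ S, a c * r ^ (p c x - p c₀ x)) l
      (𝓝 (∑ c ∈ S, if c = c₀ then a c else 0)) := by
    refine tendsto_finsetSum S fun c hc => ?_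
    by_cases h : c = c₀
    · subst h
      simp [tendsto_const_nhds]
    · have hneg : Tendsto (fun x => p c x - p c₀ x) l atBot := by
        simpa [Function.comp_def] using tendsto_neg_atTop_atBot.comp (hdom c hc h)
      simpa [h] using ((tendsto_rpow_atBot_of_base_gt_one r hr).comp hneg).const_mul (a c)
  rw [sum_ite_eq' S c₀ a, if_pos hc₀] at hlim
  filter_upwards [hlim.eventually_ne ha] with x hx
  have hfactor : ∑ c ∈ S, a c * r ^ p c x
      = r ^ p c₀ x * ∑ c ∈ S, a c * r ^ (p c x - p c₀ x) := by
    rw [mul_sum]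
    refine sum_congr rfl fun c _ => ?_
    rw [Real.rpow_sub hr₀]
    field_simp
  rw [hfactor]
  exact mul_ne_zero (Real.rpow_pos_of_pos hr₀ _).ne' hx

theorem tendsto_sum_mul_pow_atTop {k : ℕ} {d : Fin k → ℝ} {m : Fin k} (hm : (m : ℕ) ≠ 0)
    (hpos : 0 < d m) (htop : ∀ i, m < i → d i = 0) :
    Tendsto (fun q : ℝ => ∑ i, d i * q ^ (i : ℕ)) atTop atTop := by
  set P : ℝ[X] := ∑ i, C (d i) * X ^ (i : ℕ)
  have hcoeff : ∀ j : ℕ, P.coeff j = ∑ i : Fin k, if j = i then d i else 0 := by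
    simp [P]
  have hcoeff_m : P.coeff m = d m := by
    simp [hcoeff, Fin.val_inj]
  have hcoeff_gt : ∀ j : ℕ, m < j → P.coeff j = 0 := by
    intro j hj
    rw [hcoeff]
    refine sum_eq_zero fun i _ => ?_
    split_ifs with hji
    · exact htop i (Fin.lt_def.2 (hji ▸ hj))
    · rfl
  have hdeg : P.natDegree = m :=
    natDegree_eq_of_le_of_coeff_ne_zero (natDegree_le_iff_coeff_eq_zero.2 hcoeff_gt)
      (hcoeff_m ▸ hpos.ne')
  have hlead : P.leadingCoeff = d m := by rw [leadingCoeff, hdeg, hcoeff_m]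
  have hdeg_pos : 0 < P.degree := natDegree_pos_iff_degree_pos.1 (hdeg ▸ Nat.pos_of_ne_zero hm)
  simpa [P, eval_finsetSum] using
    P.tendsto_atTop_of_leadingCoeff_nonneg hdeg_pos (hlead ▸ hpos.le)

theorem Fintype.apply_eq_of_sum_eq_of_forall_ne {ι M : Type*} [Fintype ι]
    [AddCancelCommMonoid M] {f g : ι → M} (h : ∑ i, f i = ∑ i, g i) (m : ι)
    (hfg : ∀ i ≠ m, f i = g i) : f m = g m := by
  classical
  rw [← add_sum_erase _ f (mem_univ m), ← add_sum_erase _ g (mem_univ m),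
    Finset.sum_congr rfl fun i hi => hfg i (ne_of_mem_erase hi)] at h
  exact add_right_cancel h

theorem tendsto_sum_mul_pow_sub_atTop_of_toColex_lt {k : ℕ} {c c₀ : Fin k → ℕ}
    (hsum : ∑ i, c i = ∑ i, c₀ i) (hlt : toColex c < toColex c₀) :
    Tendsto (fun q : ℝ => ∑ i, (c₀ i : ℝ) * q ^ (i : ℕ) - ∑ i, (c i : ℝ) * q ^ (i : ℕ))
      atTop atTop := by
  obtain ⟨m, htop, hm⟩ := hlt
  have hm_ne : (m : ℕ) ≠ 0 := by
    intro hm₀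
    refine hm.ne (Fintype.apply_eq_of_sum_eq_of_forall_ne hsum m fun i hi => htop i ?_)
    have := Fin.val_ne_of_ne hi
    change m < i
    omega
  refine (tendsto_sum_mul_pow_atTop (d := fun i => (c₀ i : ℝ) - c i) hm_ne
    (sub_pos.2 (by exact_mod_cast hm))
    fun i hi => sub_eq_zero.2 (by exact_mod_cast (htop i hi).symm)).congr fun q => ?_
  simp only [sub_mul, sum_sub_distrib]

/-- Let `r > 1`. If `S` is a non-empty finite set of vectors `c = (c_0, …, c_{k−1})` of
non-negative integers with fixed sum `n`, and `a_c` are non-zero integers for `c ∈ S`, then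
the function `F(q) = ∑_{c ∈ S} a_c · r^{∑_i c_i q^i}` of a real variable `q` is not
identically zero.  (This is the key content of the claim that the coefficient of `t^b` in
`B_{r,q}(G; t−1, k)` is uniquely expressible in the form `∑_c a_c r^{∑_i c_i q^i}` over
vectors `c` with `∑_i c_i = |V|`.) -/
theorem exp_polynomials_independent (r : ℝ) (hr : 1 < r) (k n : ℕ)
    (S : Finset (Fin k → ℕ)) (hS : S.Nonempty) (hsum : ∀ c ∈ S, ∑ i, c i = n)
    (a : (Fin k → ℕ) → ℤ) (ha : ∀ c ∈ S, a c ≠ 0) :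
    ∃ q : ℝ, ∑ c ∈ S, (a c : ℝ) * r ^ (∑ i : Fin k, (c i : ℝ) * q ^ (i : ℕ)) ≠ 0 := by
  obtain ⟨c₀, hc₀, hmax⟩ := S.exists_max_image toColex hS
  refine (eventually_sum_mul_rpow_ne_zero (l := atTop) hr hc₀ (by exact_mod_cast ha c₀ hc₀)
    fun c hc hne => ?_).exists
  exact tendsto_sum_mul_pow_sub_atTop_of_toColex_lt (by rw [hsum c hc, hsum c₀ hc₀])
    ((hmax c hc).lt_of_ne (toColex_inj.ne.2 hne))
end
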